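/- Let M̂ be the latent-augmented MDP of a finite-horizon MDP M along an embedding kernel κ, let π⋆ be a pointwise optimal policy for M, and let π̂⋆ be a pointwise optimal policy for M̂. Fix 0 ≤ t < T and suppose that V^{π⋆}_{t+1}(s′) = Σ_{z′ ∈ Z} κ(s′)(z′) · V̂^{π̂⋆}_{t+1}(z′, s′) for every s′ ∈ S. Then V^{π⋆}_t(s) = Σ_{z ∈ Z} κ(s)(z) · V̂^{π̂⋆}_t(z, s) for every s ∈ S. -/

import Mathlib

open Finset

/-- A finite-horizon MDP `M = (S, A, T, P, R, μ, γ)` with finite nonempty state space `S`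
and finite nonempty action space `A` (nonemptiness is carried as typeclass assumptions
where needed). Probability mass functions on a finite type are represented as nonnegative
real-valued functions summing to `1`. -/
structure FinMDP (S A : Type) [Fintype S] [Fintype A] where
  T : ℕ
  hT : 1 ≤ T
  P : S → A → S → ℝ
  P_nonneg : ∀ s a s', 0 ≤ P s a s'
  P_sum_one : ∀ s a, ∑ s' : S, P s a s' = 1
  R : S → A → ℝ
  μ : S → ℝ
  μ_nonneg : ∀ s, 0 ≤ μ s
  μ_sum_one : ∑ s : S, μ s = 1
  γ : ℝ
  γ_pos : 0 < γ
  γ_le_one : γ ≤ 1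

/-- A policy `π = (π_t)_{0 ≤ t < T}`: for each time `t < T` and state `s`, a probability
mass function `π_t(s)` on the action space. -/
structure FinPolicy (S A : Type) [Fintype A] (T : ℕ) where
  p : Fin T → S → A → ℝ
  nonneg : ∀ t s a, 0 ≤ p t s a
  sum_one : ∀ t s, ∑ a : A, p t s a = 1

variable {S A Z Z' : Type} [Fintype S] [Fintype A] [Fintype Z] [Fintype Z']

/-- Auxiliary backward recursion, indexed by the number `k` of remaining steps:
`Vaux k s` is the value at time `T - k` in state `s`. -/
noncomputable def FinMDP.Vaux (M : FinMDP S A) (π : FinPolicy S A M.T) : ℕ → S → ℝ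
  | 0, _ => 0
  | k + 1, s =>
      ∑ a : A,
        π.p ⟨M.T - (k + 1), Nat.sub_lt (Nat.lt_of_lt_of_le Nat.one_pos M.hT) (Nat.succ_pos k)⟩
            s a *
          (M.R s a + M.γ * ∑ s' : S, M.P s a s' * M.Vaux π k s')

/-- The value function `V^π_t(s)` (meaningful for `0 ≤ t ≤ T`): `V^π_T(s) = 0` and, for
`t < T`, `V^π_t(s) = ∑_a π_t(s)(a) · (R(s,a) + γ · ∑_{s'} P(s,a)(s') · V^π_{t+1}(s'))`. -/
noncomputable def FinMDP.V (M : FinMDP S A) (π : FinPolicy S A M.T) (t : ℕ) (s : S) : ℝ :=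
  M.Vaux π (M.T - t) s

/-- The expected return `J(π) = ∑_s μ(s) · V^π_0(s)`. -/
noncomputable def FinMDP.J (M : FinMDP S A) (π : FinPolicy S A M.T) : ℝ :=
  ∑ s : S, M.μ s * M.V π 0 s

/-- A policy `π⋆` is pointwise optimal for `M` if `V^{π⋆}_t(s) ≥ V^π_t(s)` for every
policy `π`, every `0 ≤ t ≤ T` and every state `s`. -/
def FinMDP.PointwiseOptimal (M : FinMDP S A) (πs : FinPolicy S A M.T) : Prop :=
  ∀ (π : FinPolicy S A M.T) (t : ℕ), t ≤ M.T → ∀ s : S, M.V π t s ≤ M.V πs t s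


/-- An embedding kernel `κ : S → PMF(Z)` into a finite latent space `Z`. -/
structure FinKernel (S Z : Type) [Fintype Z] where
  k : S → Z → ℝ
  nonneg : ∀ s z, 0 ≤ k s z
  sum_one : ∀ s, ∑ z : Z, k s z = 1

/-- The latent-augmented MDP `M̂` of `M` along the embedding kernel `κ`: state space `Z × S`,
initial distribution `μ̂(z,s) = μ(s)·κ(s)(z)`, transitions
`P̂((z,s),a)(z',s') = P(s,a)(s')·κ(s')(z')`, reward `R̂((z,s),a) = R(s,a)`. -/
noncomputable def FinMDP.latentAug (M : FinMDP S A) (κ : FinKernel S Z) :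
    FinMDP (Z × S) A where
  T := M.T
  hT := M.hT
  P := fun x a y => M.P x.2 a y.2 * κ.k y.2 y.1
  P_nonneg := fun _ _ _ => mul_nonneg (M.P_nonneg _ _ _) (κ.nonneg _ _)
  P_sum_one := by
    intro x a
    rw [Fintype.sum_prod_type, Finset.sum_comm]
    calc ∑ s' : S, ∑ z' : Z, M.P x.2 a s' * κ.k s' z'
        = ∑ s' : S, M.P x.2 a s' * ∑ z' : Z, κ.k s' z' := by simp [Finset.mul_sum]
      _ = 1 := by simp [κ.sum_one, M.P_sum_one]
  R := fun x a => M.R x.2 a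
  μ := fun x => M.μ x.2 * κ.k x.2 x.1
  μ_nonneg := fun _ => mul_nonneg (M.μ_nonneg _) (κ.nonneg _ _)
  μ_sum_one := by
    rw [Fintype.sum_prod_type, Finset.sum_comm]
    calc ∑ s : S, ∑ z : Z, M.μ s * κ.k s z
        = ∑ s : S, M.μ s * ∑ z : Z, κ.k s z := by simp [Finset.mul_sum]
      _ = 1 := by simp [κ.sum_one, M.μ_sum_one]
  γ := M.γ
  γ_pos := M.γ_pos
  γ_le_one := M.γ_le_one

/-- The lift `π↑` of a policy `π` of `M` to the latent-augmented MDP: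
`π↑_t(z, s) = π_t(s)`. -/
def FinPolicy.lift {T : ℕ} (Z : Type) (π : FinPolicy S A T) : FinPolicy (Z × S) A T where
  p t x a := π.p t x.2 a
  nonneg := fun t x a => π.nonneg t x.2 a
  sum_one := fun t x => π.sum_one t x.2

/-- The marginalization `π̄` of a policy `π̂` of the latent-augmented MDP:
`π̄_t(s)(a) = ∑_z κ(s)(z) · π̂_t(z, s)(a)`. -/
noncomputable def FinKernel.marg {T : ℕ} (κ : FinKernel S Z) (π : FinPolicy (Z × S) A T) :
    FinPolicy S A T where
  p t s a := ∑ z : Z, κ.k s z * π.p t (z, s) a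
  nonneg := fun t s a =>
    Finset.sum_nonneg fun z _ => mul_nonneg (κ.nonneg _ _) (π.nonneg _ _ _)
  sum_one := by
    intro t s
    rw [Finset.sum_comm]
    calc ∑ z : Z, ∑ a : A, κ.k s z * π.p t (z, s) a
        = ∑ z : Z, κ.k s z * ∑ a : A, π.p t (z, s) a := by simp [Finset.mul_sum]
      _ = 1 := by simp [π.sum_one, κ.sum_one]


section Aux

variable {S A Z : Type} [Fintype S] [Fintype A] [Fintype Z]

lemma vaux_congr_aux (M : FinMDP S A) (π π' : FinPolicy S A M.T) :
    ∀ k, (∀ i : Fin M.T, M.T - k ≤ i.val → π.p i = π'.p i) →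
      ∀ s, M.Vaux π k s = M.Vaux π' k s := by
  intro k
  induction k with
  | zero => intro _ s; simp [FinMDP.Vaux]
  | succ k ih =>
      intro h s
      rw [FinMDP.Vaux, FinMDP.Vaux]
      have hp := h ⟨M.T - (k + 1),
        Nat.sub_lt (Nat.lt_of_lt_of_le Nat.one_pos M.hT) (Nat.succ_pos k)⟩ (le_refl _)
      have hs : ∀ s', M.Vaux π k s' = M.Vaux π' k s' :=
        ih fun i hi => h i (le_trans (Nat.sub_le_sub_left (Nat.le_succ k) M.T) hi)
      simp only [hp, hs]

lemma vaux_step (M : FinMDP S A) (π : FinPolicy S A M.T) (t : ℕ) (ht : t < M.T) (s : S) :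
    M.V π t s = ∑ a : A, π.p ⟨t, ht⟩ s a *
      (M.R s a + M.γ * ∑ s' : S, M.P s a s' * M.V π (t + 1) s') := by
  have hk : M.T - t = (M.T - (t + 1)) + 1 := by omega
  unfold FinMDP.V
  rw [hk, FinMDP.Vaux]
  have hfin : (⟨M.T - (M.T - (t + 1) + 1),
      Nat.sub_lt (Nat.lt_of_lt_of_le Nat.one_pos M.hT) (Nat.succ_pos _)⟩ : Fin M.T)
      = ⟨t, ht⟩ := Fin.ext (show M.T - (M.T - (t + 1) + 1) = t by omega)
  rw [hfin]

lemma vaux_lift (M : FinMDP S A) (κ : FinKernel S Z) (π : FinPolicy S A M.T) :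
    ∀ (k : ℕ) (z : Z) (s : S),
      (M.latentAug κ).Vaux (π.lift Z) k (z, s) = M.Vaux π k s := by
  intro k
  induction k with
  | zero => intro z s; simp [FinMDP.Vaux]
  | succ k ih =>
      intro z s
      simp only [FinMDP.Vaux]
      have hy : ∀ y : Z × S, (M.latentAug κ).Vaux (π.lift Z) k y = M.Vaux π k y.2 :=
        fun y => ih y.1 y.2
      simp only [hy]
      simp only [FinMDP.latentAug, FinPolicy.lift]
      have hin : ∀ a : A, (∑ y : Z × S, M.P s a y.2 * κ.k y.2 y.1 * M.Vaux π k y.2)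
          = ∑ s' : S, M.P s a s' * M.Vaux π k s' := by
        intro a
        rw [Fintype.sum_prod_type, Finset.sum_comm]
        refine Finset.sum_congr rfl fun s' _ => ?_
        calc ∑ z' : Z, M.P s a s' * κ.k s' z' * M.Vaux π k s'
            = (∑ z' : Z, κ.k s' z') * (M.P s a s' * M.Vaux π k s') := by
              rw [Finset.sum_mul]; exact Finset.sum_congr rfl fun z' _ => by ring
          _ = M.P s a s' * M.Vaux π k s' := by rw [κ.sum_one, one_mul]
      simp only [hin]

end Aux

/-- One-step backward propagation: fix `0 ≤ t < T` and suppose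
`V^{π⋆}_{t+1}(s') = ∑_{z'} κ(s')(z') · V̂^{π̂⋆}_{t+1}(z', s')` for every `s' ∈ S`. Then
`V^{π⋆}_t(s) = ∑_z κ(s)(z) · V̂^{π̂⋆}_t(z, s)` for every `s ∈ S`. -/
theorem stmt_17 [Nonempty S] [Nonempty A] [Nonempty Z]
    (M : FinMDP S A) (κ : FinKernel S Z)
    (πstar : FinPolicy S A M.T) (hstar : M.PointwiseOptimal πstar)
    (πhatstar : FinPolicy (Z × S) A M.T)
    (hhatstar : (M.latentAug κ).PointwiseOptimal πhatstar)
    (t : ℕ) (ht : t < M.T)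
    (hind : ∀ s' : S,
      M.V πstar (t + 1) s'
        = ∑ z' : Z, κ.k s' z' * (M.latentAug κ).V πhatstar (t + 1) (z', s')) :
    ∀ s : S,
      M.V πstar t s = ∑ z : Z, κ.k s z * (M.latentAug κ).V πhatstar t (z, s) := by
  classical
  intro s
  have htT : t ≤ M.T := le_of_lt ht
  -- Step A : ≤ direction via lifted policy
  have hlift : ∀ z : Z, (M.latentAug κ).V (πstar.lift Z) t (z, s) = M.V πstar t s :=
    fun z => vaux_lift M κ πstar _ z s
  have hA : M.V πstar t s ≤ ∑ z : Z, κ.k s z * (M.latentAug κ).V πhatstar t (z, s) := by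
    calc M.V πstar t s = ∑ z : Z, κ.k s z * M.V πstar t s := by
          rw [← Finset.sum_mul, κ.sum_one, one_mul]
      _ ≤ _ := by
          refine Finset.sum_le_sum fun z _ => mul_le_mul_of_nonneg_left ?_ (κ.nonneg s z)
          rw [← hlift z]
          exact hhatstar (πstar.lift Z) t htT (z, s)
  -- Step B : ≥ direction via the marginalized policy spliced at time t
  let π' : FinPolicy S A M.T :=
    { p := fun i s a => if i.val = t then (κ.marg πhatstar).p i s a else πstar.p i s a
      nonneg := fun i s a => by
        by_cases h : i.val = t
        · simp only [h, if_pos rfl]; exact (κ.marg πhatstar).nonneg i s a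
        · simp only [if_neg h]; exact πstar.nonneg i s a
      sum_one := fun i s => by
        by_cases h : i.val = t
        · simp only [h, if_pos rfl]; exact (κ.marg πhatstar).sum_one i s
        · simp only [if_neg h]; exact πstar.sum_one i s }
  have hV'succ : ∀ s' : S, M.V π' (t + 1) s' = M.V πstar (t + 1) s' := by
    intro s'
    unfold FinMDP.V
    refine vaux_congr_aux M π' πstar _ (fun i hi => ?_) s'
    have hne : i.val ≠ t := by omega
    funext s a
    simp only [π', if_neg hne]
  have hpt : ∀ sa a, π'.p ⟨t, ht⟩ sa a = (κ.marg πhatstar).p ⟨t, ht⟩ sa a := by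
    intro sa a; simp [π']
  have hB : (∑ z : Z, κ.k s z * (M.latentAug κ).V πhatstar t (z, s)) = M.V π' t s := by
    have hhat : ∀ z : Z, (M.latentAug κ).V πhatstar t (z, s)
        = ∑ a : A, πhatstar.p ⟨t, ht⟩ (z, s) a *
            (M.R s a + M.γ * ∑ s' : S, M.P s a s' * M.V πstar (t + 1) s') := by
      intro z
      rw [vaux_step (M.latentAug κ) πhatstar t ht (z, s)]
      refine Finset.sum_congr rfl fun a _ => ?_
      congr 1
      show M.R s a + M.γ * (∑ y : Z × S,
          M.P s a y.2 * κ.k y.2 y.1 * (M.latentAug κ).V πhatstar (t + 1) y)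
        = M.R s a + M.γ * ∑ s' : S, M.P s a s' * M.V πstar (t + 1) s'
      congr 1
      congr 1
      rw [Fintype.sum_prod_type, Finset.sum_comm]
      refine Finset.sum_congr rfl fun s' _ => ?_
      rw [hind s', Finset.mul_sum]
      refine Finset.sum_congr rfl fun z' _ => by ring
    calc (∑ z : Z, κ.k s z * (M.latentAug κ).V πhatstar t (z, s))
        = ∑ z : Z, ∑ a : A, κ.k s z * πhatstar.p ⟨t, ht⟩ (z, s) a *
            (M.R s a + M.γ * ∑ s' : S, M.P s a s' * M.V πstar (t + 1) s') := by
          refine Finset.sum_congr rfl fun z _ => ?_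
          rw [hhat z, Finset.mul_sum]
          refine Finset.sum_congr rfl fun a _ => by ring
      _ = ∑ a : A, (∑ z : Z, κ.k s z * πhatstar.p ⟨t, ht⟩ (z, s) a) *
            (M.R s a + M.γ * ∑ s' : S, M.P s a s' * M.V πstar (t + 1) s') := by
          rw [Finset.sum_comm]
          refine Finset.sum_congr rfl fun a _ => by rw [Finset.sum_mul]
      _ = M.V π' t s := by
          rw [vaux_step M π' t ht s]
          refine Finset.sum_congr rfl fun a _ => ?_
          rw [hpt s a]
          have hb : ∑ s' : S, M.P s a s' * M.V π' (t + 1) s'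
              = ∑ s' : S, M.P s a s' * M.V πstar (t + 1) s' :=
            Finset.sum_congr rfl fun s' _ => by rw [hV'succ s']
          rw [hb]
          simp only [FinKernel.marg]
  have hB' : (∑ z : Z, κ.k s z * (M.latentAug κ).V πhatstar t (z, s)) ≤ M.V πstar t s := by
    rw [hB]; exact hstar π' t htT s
  linarith
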